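/- arXiv:1409.4348 — 6 statements merged into one kernel-verified Lean document; each statement's English description precedes it below -/
import Mathlib

section
/- Let C be a semiabelian category, A an object of C, and let i' : A' ⟶ A and i'' : A'' ⟶ A be strict monomorphisms. Set v := i'' ≫ cokernel.π i' : A'' ⟶ cokernel i' and k := kernel.ι v ≫ i'' : kernel v ⟶ A. Then: (1) k is a strict monomorphism; (2) k factors through i'' (namely via kernel.ι v) and k factors through i', i.e. there is a morphism w : kernel v ⟶ A' with w ≫ i' = k; and (3) for every strict monomorphism x : X ⟶ A such that x factors through i' and x factors through i'', x factors through k. Hence (kernel v, k) is the infimum of the strict subobjects (A', i') and (A'', i'') in the preordered class of strict subobjects of A. -/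
open CategoryTheory CategoryTheory.Limits

/-!
The composite `kernel.ι v ≫ i''` is the common kernel of `cokernel.π i'` and `cokernel.π i''`:
a morphism killed by both factors through `i''` because `i''` is strict, and the factor is then
killed by `v`. A monomorphism is strict exactly when it has this lifting property against the
morphisms killed by its cokernel, which gives both the strictness of `k` and its universality.
-/

namespace CategoryTheory.Abelian

variable {C : Type*} [Category C] [HasZeroMorphisms C] [HasZeroObject C]
  [HasKernels C] [HasCokernels C]

lemma isIso_coimageImageComparison_iff_isIso_factorThruImage {X Y : C} (f : X ⟶ Y) [Mono f] :
    IsIso (coimageImageComparison f) ↔ IsIso (Abelian.factorThruImage f) := by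
  rw [← isIso_comp_left_iff (coimage.π f)]
  exact Iff.of_eq (congrArg IsIso (cokernel.π_desc _ _ _))

lemma isIso_coimageImageComparison_iff_forall_exists_lift {X Y : C} (f : X ⟶ Y) [Mono f] :
    IsIso (coimageImageComparison f) ↔
      ∀ {T : C} (g : T ⟶ Y), g ≫ cokernel.π f = 0 → ∃ t : T ⟶ X, t ≫ f = g := by
  rw [isIso_coimageImageComparison_iff_isIso_factorThruImage]
  constructor
  · intro _ T g hg
    refine ⟨kernel.lift (cokernel.π f) g hg ≫ inv (Abelian.factorThruImage f), ?_⟩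
    have hinv : inv (Abelian.factorThruImage f) ≫ f = image.ι f := by
      rw [IsIso.inv_comp_eq, image.fac]
    rw [Category.assoc, hinv, kernel.lift_ι]
  · intro hlift
    obtain ⟨t, ht⟩ := hlift (image.ι f) (kernel.condition _)
    refine ⟨t, ?_, ?_⟩
    · rw [← cancel_mono f, Category.assoc, ht, image.fac, Category.id_comp]
    · rw [← cancel_mono (image.ι f), Category.assoc, image.fac, ht, Category.id_comp]

variable {A A' A'' : C} (i' : A' ⟶ A) (i'' : A'' ⟶ A)

lemma exists_lift_kernel_ι_comp_of_comp_cokernel_π_eq_zero [Mono i'']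
    (h'' : IsIso (coimageImageComparison i'')) {T : C} (g : T ⟶ A)
    (hg' : g ≫ cokernel.π i' = 0) (hg'' : g ≫ cokernel.π i'' = 0) :
    ∃ t : T ⟶ kernel (i'' ≫ cokernel.π i'), t ≫ kernel.ι _ ≫ i'' = g := by
  obtain ⟨s, hs⟩ := (isIso_coimageImageComparison_iff_forall_exists_lift i'').1 h'' g hg''
  have hsv : s ≫ i'' ≫ cokernel.π i' = 0 := by rw [← Category.assoc, hs, hg']
  exact ⟨kernel.lift _ s hsv, by rw [kernel.lift_ι_assoc, hs]⟩

lemma isIso_coimageImageComparison_kernel_ι_comp [Mono i'']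
    (h'' : IsIso (coimageImageComparison i'')) :
    IsIso (coimageImageComparison (kernel.ι (i'' ≫ cokernel.π i') ≫ i'')) := by
  set k := kernel.ι (i'' ≫ cokernel.π i') ≫ i''
  have hk' : k ≫ cokernel.π i' = 0 := by rw [Category.assoc, kernel.condition]
  have hk'' : k ≫ cokernel.π i'' = 0 := by rw [Category.assoc, cokernel.condition, comp_zero]
  refine (isIso_coimageImageComparison_iff_forall_exists_lift k).2 fun g hg => ?_
  refine exists_lift_kernel_ι_comp_of_comp_cokernel_π_eq_zero i' i'' h'' g ?_ ?_
  · rw [← cokernel.π_desc k _ hk', ← Category.assoc, hg, zero_comp]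
  · rw [← cokernel.π_desc k _ hk'', ← Category.assoc, hg, zero_comp]

end CategoryTheory.Abelian

theorem stmt10_general {C : Type*} [Category C] [Preadditive C] [HasZeroObject C]
    [HasKernels C] [HasCokernels C]
    {A A' A'' : C} (i' : A' ⟶ A) (i'' : A'' ⟶ A) [Mono i'] [Mono i'']
    (h' : IsIso (Abelian.coimageImageComparison i'))
    (h'' : IsIso (Abelian.coimageImageComparison i''))
    (v : A'' ⟶ cokernel i') (hv : v = i'' ≫ cokernel.π i')
    (k : kernel v ⟶ A) (hk : k = kernel.ι v ≫ i'') :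
    (Mono k ∧ IsIso (Abelian.coimageImageComparison k)) ∧
    (kernel.ι v ≫ i'' = k ∧ ∃ w : kernel v ⟶ A', w ≫ i' = k) ∧
    (∀ (X : C) (x : X ⟶ A), Mono x → IsIso (Abelian.coimageImageComparison x) →
      (∃ t : X ⟶ A', x = t ≫ i') → (∃ t : X ⟶ A'', x = t ≫ i'') →
      ∃ t : X ⟶ kernel v, x = t ≫ k) := by
  subst hv hk
  refine ⟨⟨mono_comp _ _, Abelian.isIso_coimageImageComparison_kernel_ι_comp i' i'' h''⟩,
    ⟨rfl, ?_⟩, ?_⟩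
  · exact (Abelian.isIso_coimageImageComparison_iff_forall_exists_lift i').1 h' _
      (by rw [Category.assoc, kernel.condition])
  · rintro X x - - ⟨t', rfl⟩ ⟨t'', ht''⟩
    obtain ⟨t, ht⟩ :=
      Abelian.exists_lift_kernel_ι_comp_of_comp_cokernel_π_eq_zero i' i'' h'' (t' ≫ i')
      (by rw [Category.assoc, cokernel.condition, comp_zero])
      (by rw [ht'', Category.assoc, cokernel.condition, comp_zero])
    exact ⟨t, ht.symm⟩

theorem stmt10 {C : Type*} [Category C] [Preadditive C] [HasZeroObject C]
    [HasKernels C] [HasCokernels C] [HasFiniteProducts C]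
    (hsemi : ∀ {X Y : C} (f : X ⟶ Y),
      Mono (Abelian.coimageImageComparison f) ∧ Epi (Abelian.coimageImageComparison f))
    {A A' A'' : C} (i' : A' ⟶ A) (i'' : A'' ⟶ A) [Mono i'] [Mono i'']
    (h' : IsIso (Abelian.coimageImageComparison i'))
    (h'' : IsIso (Abelian.coimageImageComparison i''))
    (v : A'' ⟶ cokernel i') (hv : v = i'' ≫ cokernel.π i')
    (k : kernel v ⟶ A) (hk : k = kernel.ι v ≫ i'') :
    (Mono k ∧ IsIso (Abelian.coimageImageComparison k)) ∧
    (kernel.ι v ≫ i'' = k ∧ ∃ w : kernel v ⟶ A', w ≫ i' = k) ∧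
    (∀ (X : C) (x : X ⟶ A), Mono x → IsIso (Abelian.coimageImageComparison x) →
      (∃ t : X ⟶ A', x = t ≫ i') → (∃ t : X ⟶ A'', x = t ≫ i'') →
      ∃ t : X ⟶ kernel v, x = t ≫ k) :=
  stmt10_general i' i'' h' h'' v hv k hk
end

section
/- Let C be a semiabelian category, A an object of C, and let i' : A' ⟶ A and i'' : A'' ⟶ A be strict monomorphisms. Then there exists a strict monomorphism m : M ⟶ A such that i' factors through m, i'' factors through m, and for every strict monomorphism n : N ⟶ A through which both i' and i'' factor, m factors through n. That is, every pair of strict subobjects of A admits a supremum in the preordered class of strict subobjects of A. -/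
open CategoryTheory CategoryTheory.Limits

section Aux

variable {C : Type*} [Category C] [Preadditive C] [HasZeroObject C]
    [HasKernels C] [HasCokernels C]

lemma aux_pi_iso {X Y : C} (f : X ⟶ Y) [Mono f] :
    IsIso (cokernel.π (kernel.ι f)) := by
  have h0 : kernel.ι f = 0 := by
    rw [← cancel_mono f, kernel.condition, zero_comp]
  refine ⟨⟨cokernel.desc _ (𝟙 X) (by rw [h0, Category.comp_id]), ?_, ?_⟩⟩
  · simp
  · rw [← cancel_epi (cokernel.π (kernel.ι f))]
    simp

lemma aux_lift_iso {X Y : C} (f : X ⟶ Y) [Mono f]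
    (h : IsIso (Abelian.coimageImageComparison f)) :
    IsIso (kernel.lift (cokernel.π f) f (cokernel.condition f)) := by
  have hπ := aux_pi_iso f
  have heq : kernel.lift (cokernel.π f) f (cokernel.condition f) =
      cokernel.π (kernel.ι f) ≫ Abelian.coimageImageComparison f := by
    rw [← cancel_mono (kernel.ι (cokernel.π f))]
    simp [Abelian.coimage_image_factorisation f]
  rw [heq]
  infer_instance

lemma aux_ker_strict {X Y : C} (g : X ⟶ Y) :
    IsIso (Abelian.coimageImageComparison (kernel.ι g)) := by
  have hπ := aux_pi_iso (kernel.ι g)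
  have hg : kernel.ι (cokernel.π (kernel.ι g)) ≫ g = 0 := by
    have hgd : kernel.ι (cokernel.π (kernel.ι g)) ≫ g =
        kernel.ι (cokernel.π (kernel.ι g)) ≫ cokernel.π (kernel.ι g) ≫
          cokernel.desc (kernel.ι g) g (kernel.condition g) := by
      rw [cokernel.π_desc]
    rw [hgd, ← Category.assoc, kernel.condition, zero_comp]
  have hj : IsIso (kernel.lift (cokernel.π (kernel.ι g)) (kernel.ι g)
      (cokernel.condition (kernel.ι g))) := by
    set j := kernel.lift (cokernel.π (kernel.ι g)) (kernel.ι g)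
      (cokernel.condition (kernel.ι g)) with hjdef
    set k := kernel.lift g (kernel.ι (cokernel.π (kernel.ι g))) hg with hkdef
    have hk : k ≫ kernel.ι g = kernel.ι (cokernel.π (kernel.ι g)) :=
      kernel.lift_ι _ _ _
    have hji : j ≫ kernel.ι (cokernel.π (kernel.ι g)) = kernel.ι g :=
      kernel.lift_ι _ _ _
    refine ⟨⟨k, ?_, ?_⟩⟩
    · rw [← cancel_mono (kernel.ι g), Category.assoc, hk, hji, Category.id_comp]
    · rw [← cancel_mono (kernel.ι (cokernel.π (kernel.ι g))), Category.assoc,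
        hji, hk, Category.id_comp]
  have heq : Abelian.coimageImageComparison (kernel.ι g) =
      inv (cokernel.π (kernel.ι (kernel.ι g))) ≫
        kernel.lift (cokernel.π (kernel.ι g)) (kernel.ι g)
          (cokernel.condition (kernel.ι g)) := by
    rw [← cancel_mono (kernel.ι (cokernel.π (kernel.ι g))),
        ← cancel_epi (cokernel.π (kernel.ι (kernel.ι g)))]
    simp [Abelian.coimage_image_factorisation (kernel.ι g)]
  rw [heq]
  infer_instance

end Aux

theorem stmt11 {C : Type*} [Category C] [Preadditive C] [HasZeroObject C]
    [HasKernels C] [HasCokernels C] [HasFiniteProducts C]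
    (hsemi : ∀ {X Y : C} (f : X ⟶ Y),
      Mono (Abelian.coimageImageComparison f) ∧ Epi (Abelian.coimageImageComparison f))
    {A A' A'' : C} (i' : A' ⟶ A) (i'' : A'' ⟶ A) [Mono i'] [Mono i'']
    (h' : IsIso (Abelian.coimageImageComparison i'))
    (h'' : IsIso (Abelian.coimageImageComparison i'')) :
    ∃ (M : C) (m : M ⟶ A), Mono m ∧ IsIso (Abelian.coimageImageComparison m) ∧
      (∃ t : A' ⟶ M, i' = t ≫ m) ∧ (∃ t : A'' ⟶ M, i'' = t ≫ m) ∧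
      ∀ (N : C) (n : N ⟶ A), Mono n → IsIso (Abelian.coimageImageComparison n) →
        (∃ t : A' ⟶ N, i' = t ≫ n) → (∃ t : A'' ⟶ N, i'' = t ≫ n) →
        ∃ t : M ⟶ N, m = t ≫ n := by
  haveI : HasBinaryBiproducts C := HasBinaryBiproducts.of_hasBinaryProducts
  set u : A' ⊞ A'' ⟶ A := biprod.desc i' i'' with hu
  refine ⟨kernel (cokernel.π u), kernel.ι (cokernel.π u), inferInstance,
    aux_ker_strict _, ?_, ?_, ?_⟩
  · refine ⟨biprod.inl ≫ kernel.lift (cokernel.π u) u (cokernel.condition u), ?_⟩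
    rw [Category.assoc, kernel.lift_ι, hu, biprod.inl_desc]
  · refine ⟨biprod.inr ≫ kernel.lift (cokernel.π u) u (cokernel.condition u), ?_⟩
    rw [Category.assoc, kernel.lift_ι, hu, biprod.inr_desc]
  · rintro N n hn hniso ⟨t', ht'⟩ ⟨t'', ht''⟩
    have hun : u ≫ cokernel.π n = 0 := by
      have : u = biprod.desc t' t'' ≫ n := by
        rw [hu]; ext <;> simp [← ht', ← ht'']
      rw [this, Category.assoc, cokernel.condition, comp_zero]
    have hmn : kernel.ι (cokernel.π u) ≫ cokernel.π n = 0 := by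
      have : cokernel.π n = cokernel.π u ≫ cokernel.desc u (cokernel.π n) hun := by
        simp
      rw [this, ← Category.assoc, kernel.condition, zero_comp]
    haveI := hn
    haveI := aux_lift_iso n hniso
    refine ⟨kernel.lift (cokernel.π n) (kernel.ι (cokernel.π u)) hmn ≫
      inv (kernel.lift (cokernel.π n) n (cokernel.condition n)), ?_⟩
    have hinv : inv (kernel.lift (cokernel.π n) n (cokernel.condition n)) ≫ n =
        kernel.ι (cokernel.π n) := by
      rw [IsIso.inv_comp_eq, kernel.lift_ι]
    rw [Category.assoc, hinv, kernel.lift_ι]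
end

section
/- Let C be a semiabelian category, A an object of C, and let i' : A' ⟶ A and i'' : A'' ⟶ A be strict monomorphisms such that every strict monomorphism m : M ⟶ A through which both i' and i'' factor is an isomorphism (i.e. the supremum of the strict subobjects A' and A'' is A itself). Then the morphism u := i'' ≫ cokernel.π i' : A'' ⟶ cokernel i' is an epimorphism. -/
open CategoryTheory CategoryTheory.Limits

lemma kernel_ι_strict {C : Type*} [Category C] [Preadditive C] [HasZeroObject C]
    [HasKernels C] [HasCokernels C] {X Y : C} (g : X ⟶ Y) :
    IsIso (Abelian.coimageImageComparison (kernel.ι g)) := by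
  set u : kernel g ⟶ X := kernel.ι g with hu
  -- the canonical map to the abelian image of u
  set s : kernel g ⟶ Abelian.image u := Abelian.factorThruImage u with hs
  have himg : Abelian.image.ι u ≫ g = 0 := by
    have h2 : Abelian.image.ι u ≫ g
        = kernel.ι (cokernel.π u) ≫ cokernel.π u ≫ cokernel.desc u g (kernel.condition g) := by
      rw [cokernel.π_desc]
    rw [h2, ← Category.assoc, kernel.condition, zero_comp]
  set t : Abelian.image u ⟶ kernel g := kernel.lift g (Abelian.image.ι u) himg with ht
  have hst : s ≫ t = 𝟙 _ := by
    have : (s ≫ t) ≫ u = 𝟙 _ ≫ u := by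
      simp [hs, ht, hu]
    exact Mono.right_cancellation _ _ this
  have hts : t ≫ s = 𝟙 _ := by
    have : (t ≫ s) ≫ Abelian.image.ι u = 𝟙 _ ≫ Abelian.image.ι u := by
      simp [hs, ht, hu]
    exact Mono.right_cancellation _ _ this
  have hsiso : IsIso s := ⟨t, hst, hts⟩
  have hπ : IsIso (Abelian.coimage.π u) := cokernel.of_kernel_of_mono u
  have key : Abelian.coimage.π u ≫ Abelian.coimageImageComparison u = s := by
    apply Mono.right_cancellation (f := Abelian.image.ι u)
    rw [Category.assoc, Abelian.coimage_image_factorisation]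
    simp [hs, hu]
  have : IsIso (Abelian.coimage.π u ≫ Abelian.coimageImageComparison u) := key ▸ hsiso
  exact IsIso.of_isIso_comp_left (Abelian.coimage.π u) _

theorem stmt13 {C : Type*} [Category C] [Preadditive C] [HasZeroObject C]
    [HasKernels C] [HasCokernels C] [HasFiniteProducts C]
    (hsemi : ∀ {X Y : C} (f : X ⟶ Y),
      Mono (Abelian.coimageImageComparison f) ∧ Epi (Abelian.coimageImageComparison f))
    {A A' A'' : C} (i' : A' ⟶ A) (i'' : A'' ⟶ A) [Mono i'] [Mono i'']
    (h' : IsIso (Abelian.coimageImageComparison i'))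
    (h'' : IsIso (Abelian.coimageImageComparison i''))
    (hsup : ∀ (M : C) (m : M ⟶ A), Mono m → IsIso (Abelian.coimageImageComparison m) →
      (∃ t : A' ⟶ M, i' = t ≫ m) → (∃ t : A'' ⟶ M, i'' = t ≫ m) → IsIso m) :
    Epi (i'' ≫ cokernel.π i') := by
  set u : A'' ⟶ cokernel i' := i'' ≫ cokernel.π i' with hu
  set c : cokernel i' ⟶ cokernel u := cokernel.π u with hc
  set f : A ⟶ cokernel u := cokernel.π i' ≫ c with hf
  have hi' : i' ≫ f = 0 := by rw [hf, ← Category.assoc, cokernel.condition, zero_comp]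
  have hi'' : i'' ≫ f = 0 := by rw [hf, ← Category.assoc, ← hu, hc, cokernel.condition]
  have hm : IsIso (kernel.ι f) :=
    hsup _ (kernel.ι f) inferInstance (kernel_ι_strict f)
      ⟨kernel.lift f i' hi', by rw [kernel.lift_ι]⟩
      ⟨kernel.lift f i'' hi'', by rw [kernel.lift_ι]⟩
  have hf0 : f = 0 := by
    have := kernel.condition f
    rwa [← IsIso.eq_inv_comp, comp_zero] at this
  have hc0 : c = 0 := by
    have : cokernel.π i' ≫ c = cokernel.π i' ≫ 0 := by rw [comp_zero, ← hf, hf0]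
    exact Epi.left_cancellation _ _ this
  exact Preadditive.epi_of_cokernel_zero hc0
end

section
/- Let C be a semiabelian category, let i'' : A'' ⟶ A be a strict monomorphism, let i : A' ⟶ A'' be a strict monomorphism, and assume that the composite i' := i ≫ i'' : A' ⟶ A is a strict monomorphism. Let v : cokernel i' ⟶ cokernel i'' be the unique morphism with cokernel.π i' ≫ v = cokernel.π i''. Then there exists a morphism g : cokernel i ⟶ kernel v that is both a monomorphism and an epimorphism and satisfies cokernel.π i ≫ g ≫ kernel.ι v = i'' ≫ cokernel.π i'. (That is, there is a bijective morphism A''/A' ⟶ Ker(v ; A/A' ⟶ A/A'').) -/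
open CategoryTheory CategoryTheory.Limits

/-- A strict mono is a kernel of its cokernel: any `t` killed by `cokernel.π m`
factors through `m`. -/
lemma strict_mono_lift {C : Type*} [Category C] [Preadditive C] [HasZeroObject C]
    [HasKernels C] [HasCokernels C] {A B T : C} (m : A ⟶ B) [Mono m]
    (h : IsIso (Abelian.coimageImageComparison m)) (t : T ⟶ B)
    (ht : t ≫ cokernel.π m = 0) : ∃ w : T ⟶ A, w ≫ m = t := by
  haveI : IsIso (Abelian.coimage.π m) := cokernel.of_kernel_of_mono m
  have fac := Abelian.coimage_image_factorisation m
  have h1 : inv (Abelian.coimage.π m) ≫ m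
      = Abelian.coimageImageComparison m ≫ Abelian.image.ι m := by
    rw [IsIso.inv_comp_eq, fac]
  refine ⟨kernel.lift (cokernel.π m) t ht ≫ inv (Abelian.coimageImageComparison m) ≫
    inv (Abelian.coimage.π m), ?_⟩
  rw [Category.assoc, Category.assoc, h1, IsIso.inv_hom_id_assoc]
  exact kernel.lift_ι _ _ _

theorem stmt16 {C : Type*} [Category C] [Preadditive C] [HasZeroObject C]
    [HasKernels C] [HasCokernels C] [HasFiniteProducts C]
    (hsemi : ∀ {X Y : C} (f : X ⟶ Y),
      Mono (Abelian.coimageImageComparison f) ∧ Epi (Abelian.coimageImageComparison f))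
    {A A' A'' : C} (i'' : A'' ⟶ A) (i : A' ⟶ A'') [Mono i''] [Mono i]
    (h'' : IsIso (Abelian.coimageImageComparison i''))
    (hi : IsIso (Abelian.coimageImageComparison i))
    (hi' : IsIso (Abelian.coimageImageComparison (i ≫ i'')))
    (v : cokernel (i ≫ i'') ⟶ cokernel i'')
    (hv : cokernel.π (i ≫ i'') ≫ v = cokernel.π i'') :
    ∃ g : cokernel i ⟶ kernel v, Mono g ∧ Epi g ∧
      cokernel.π i ≫ g ≫ kernel.ι v = i'' ≫ cokernel.π (i ≫ i'') := by
  set q := cokernel.π (i ≫ i'') with hqdef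
  set u : A'' ⟶ cokernel (i ≫ i'') := i'' ≫ q with hudef
  have hiu : i ≫ u = 0 := by
    rw [hudef, ← Category.assoc, hqdef, cokernel.condition]
  have huv : u ≫ v = 0 := by
    rw [hudef, Category.assoc, hv, cokernel.condition]
  let f : cokernel i ⟶ cokernel (i ≫ i'') := cokernel.desc i u hiu
  have hπf : cokernel.π i ≫ f = u := cokernel.π_desc _ _ _
  have hfv : f ≫ v = 0 := by
    rw [← cancel_epi (cokernel.π i), ← Category.assoc, hπf, huv, comp_zero]
  let g : cokernel i ⟶ kernel v := kernel.lift v f hfv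
  have hgι : g ≫ kernel.ι v = f := kernel.lift_ι _ _ _
  -- φ : cokernel u ≅ cokernel i''
  let φ : cokernel u ⟶ cokernel i'' := cokernel.desc u v huv
  have hπφ : cokernel.π u ≫ φ = v := cokernel.π_desc _ _ _
  have hψ0 : i'' ≫ q ≫ cokernel.π u = 0 := by
    rw [← Category.assoc, ← hudef, cokernel.condition]
  let ψ : cokernel i'' ⟶ cokernel u := cokernel.desc i'' (q ≫ cokernel.π u) hψ0
  have hπψ : cokernel.π i'' ≫ ψ = q ≫ cokernel.π u := cokernel.π_desc _ _ _
  haveI : IsIso φ := by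
    refine ⟨ψ, ?_, ?_⟩
    · rw [← cancel_epi (cokernel.π u), ← Category.assoc, hπφ, Category.comp_id,
        ← cancel_epi q, ← Category.assoc, hv, hπψ]
    · rw [← cancel_epi (cokernel.π i''), ← Category.assoc, hπψ, Category.comp_id,
        Category.assoc, hπφ, hv]
  -- β : image u ≅ kernel v
  have hιπu : kernel.ι v ≫ cokernel.π u = 0 := by
    rw [← cancel_mono φ, Category.assoc, hπφ, kernel.condition, zero_comp]
  have hιv0 : kernel.ι (cokernel.π u) ≫ v = 0 := by
    rw [← hπφ, ← Category.assoc, kernel.condition, zero_comp]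
  let β : kernel (cokernel.π u) ⟶ kernel v := kernel.lift v (kernel.ι (cokernel.π u)) hιv0
  have hβι : β ≫ kernel.ι v = kernel.ι (cokernel.π u) := kernel.lift_ι _ _ _
  let β' : kernel v ⟶ kernel (cokernel.π u) := kernel.lift _ (kernel.ι v) hιπu
  have hβ'ι : β' ≫ kernel.ι (cokernel.π u) = kernel.ι v := kernel.lift_ι _ _ _
  haveI : IsIso β := by
    refine ⟨β', ?_, ?_⟩
    · rw [← cancel_mono (kernel.ι (cokernel.π u)), Category.assoc, hβ'ι, hβι,
        Category.id_comp]
    · rw [← cancel_mono (kernel.ι v), Category.assoc, hβι, hβ'ι, Category.id_comp]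
  -- α : coimage u ≅ cokernel i
  have hκ : kernel.lift u i hiu ≫ kernel.ι u = i := kernel.lift_ι _ _ _
  obtain ⟨w, hw⟩ : ∃ w : kernel u ⟶ A', w ≫ (i ≫ i'') = kernel.ι u ≫ i'' := by
    refine strict_mono_lift (i ≫ i'') hi' (kernel.ι u ≫ i'') ?_
    rw [Category.assoc, ← hqdef, ← hudef, kernel.condition]
  have hwi : w ≫ i = kernel.ι u := by
    rw [← cancel_mono i'', Category.assoc, ← hw]
  have hιuπ : kernel.ι u ≫ cokernel.π i = 0 := by
    rw [← hwi, Category.assoc, cokernel.condition, comp_zero]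
  let α : cokernel (kernel.ι u) ⟶ cokernel i := cokernel.desc _ (cokernel.π i) hιuπ
  have hπα : cokernel.π (kernel.ι u) ≫ α = cokernel.π i := cokernel.π_desc _ _ _
  have hiπ : i ≫ cokernel.π (kernel.ι u) = 0 := by
    calc i ≫ cokernel.π (kernel.ι u)
        = kernel.lift u i hiu ≫ kernel.ι u ≫ cokernel.π (kernel.ι u) := by
          rw [← Category.assoc, hκ]
      _ = 0 := by rw [cokernel.condition, comp_zero]
  let α' : cokernel i ⟶ cokernel (kernel.ι u) := cokernel.desc i _ hiπ
  have hπα' : cokernel.π i ≫ α' = cokernel.π (kernel.ι u) := cokernel.π_desc _ _ _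
  haveI : IsIso α' := by
    refine ⟨α, ?_, ?_⟩
    · rw [← cancel_epi (cokernel.π i), ← Category.assoc, hπα', hπα, Category.comp_id]
    · rw [← cancel_epi (cokernel.π (kernel.ι u)), ← Category.assoc, hπα, hπα',
        Category.comp_id]
  -- key factorization
  have h2 : (α' ≫ Abelian.coimageImageComparison u ≫ β) ≫ kernel.ι v = f := by
    rw [← cancel_epi (cokernel.π i), hπf]
    rw [← Category.assoc, ← Category.assoc, ← Category.assoc, hπα']
    rw [Category.assoc, Category.assoc, hβι]
    exact Abelian.coimage_image_factorisation u
  have key : g = α' ≫ Abelian.coimageImageComparison u ≫ β := by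
    rw [← cancel_mono (kernel.ι v), hgι, h2]
  refine ⟨g, ?_, ?_, ?_⟩
  · haveI := (hsemi u).1
    rw [key]; exact mono_comp _ _
  · haveI := (hsemi u).2
    rw [key]; exact epi_comp _ _
  · rw [hgι]; exact hπf
end

section
/- Let C be a semiabelian category, let i'' : A'' ⟶ A be a strict monomorphism, let i : A' ⟶ A'' be a strict monomorphism, and assume that i' := i ≫ i'' is a strict monomorphism. Let v : cokernel i' ⟶ cokernel i'' be the unique morphism with cokernel.π i' ≫ v = cokernel.π i''. Then the unique morphism v̄ : cokernel (kernel.ι v) ⟶ cokernel i'' satisfying cokernel.π (kernel.ι v) ≫ v̄ = v is an isomorphism. (That is, (A/A')/Ker(v) is isomorphic to A/A''.) -/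
open CategoryTheory CategoryTheory.Limits

theorem stmt17 {C : Type*} [Category C] [Preadditive C] [HasZeroObject C]
    [HasKernels C] [HasCokernels C] [HasFiniteProducts C]
    (hsemi : ∀ {X Y : C} (f : X ⟶ Y),
      Mono (Abelian.coimageImageComparison f) ∧ Epi (Abelian.coimageImageComparison f))
    {A A' A'' : C} (i'' : A'' ⟶ A) (i : A' ⟶ A'') [Mono i''] [Mono i]
    (h'' : IsIso (Abelian.coimageImageComparison i''))
    (hi : IsIso (Abelian.coimageImageComparison i))
    (hi' : IsIso (Abelian.coimageImageComparison (i ≫ i'')))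
    (v : cokernel (i ≫ i'') ⟶ cokernel i'')
    (hv : cokernel.π (i ≫ i'') ≫ v = cokernel.π i'') :
    IsIso (cokernel.desc (kernel.ι v) v (kernel.condition v)) := by
  haveI : Epi (cokernel.π (i ≫ i'') ≫ v) := by rw [hv]; infer_instance
  haveI hepi : Epi v := epi_of_epi (cokernel.π (i ≫ i'')) v
  have hk : (i'' ≫ cokernel.π (i ≫ i'')) ≫ v = 0 := by
    rw [Category.assoc, hv, cokernel.condition]
  have hfac : i'' ≫ cokernel.π (i ≫ i'')
      = kernel.lift v (i'' ≫ cokernel.π (i ≫ i'')) hk ≫ kernel.ι v :=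
    (kernel.lift_ι _ _ _).symm
  have hzero : i'' ≫ cokernel.π (i ≫ i'') ≫ cokernel.π (kernel.ι v) = 0 := by
    rw [← Category.assoc, hfac, Category.assoc, cokernel.condition, comp_zero]
  let s : cokernel i'' ⟶ cokernel (kernel.ι v) :=
    cokernel.desc i'' (cokernel.π (i ≫ i'') ≫ cokernel.π (kernel.ι v)) hzero
  have h1 : v ≫ s = cokernel.π (kernel.ι v) := by
    rw [← cancel_epi (cokernel.π (i ≫ i'')), ← Category.assoc, hv]
    simp [s]
  refine ⟨s, ?_, ?_⟩
  · rw [← cancel_epi (cokernel.π (kernel.ι v))]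
    simp [h1]
  · rw [← cancel_epi v, ← Category.assoc, h1]
    simp
end

section
/- Let C be an abelian category, A an object of C, and let X and Y be subobjects of A. Then there is an isomorphism between the cokernel of the canonical monomorphism (X ⊓ Y) ⟶ Y (induced by inf_le_right in the subobject lattice of A) and the cokernel of the canonical monomorphism X ⟶ (X ⊔ Y) (induced by le_sup_left in the subobject lattice of A). That is, Y/(X ⊓ Y) ≅ (X ⊔ Y)/X. -/
open CategoryTheory CategoryTheory.Limits

theorem stmt18 {C : Type*} [Category C] [Abelian C] {A : C} (X Y : Subobject A) :
    Nonempty (cokernel (Subobject.ofLE (X ⊓ Y) Y inf_le_right) ≅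
      cokernel (Subobject.ofLE X (X ⊔ Y) le_sup_left)) := by
  set S : Subobject A := X ⊔ Y with hS
  set f : ((X ⊓ Y : Subobject A) : C) ⟶ (Y : C) := Subobject.ofLE (X ⊓ Y) Y inf_le_right with hf
  set g : (X : C) ⟶ (S : C) := Subobject.ofLE X S le_sup_left with hg
  set g' : (Y : C) ⟶ (S : C) := Subobject.ofLE Y S le_sup_right with hg'
  set π : (S : C) ⟶ cokernel g := cokernel.π g with hπ
  have hfg' : f ≫ g' = Subobject.ofLE (X ⊓ Y) X inf_le_left ≫ g := by
    rw [hf, hg', hg, Subobject.ofLE_comp_ofLE, Subobject.ofLE_comp_ofLE]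
  have w0 : f ≫ g' ≫ π = 0 := by
    rw [← Category.assoc, hfg', Category.assoc, hπ, cokernel.condition, comp_zero]
  -- `f` is a kernel of `g' ≫ π`
  have lim : IsLimit (KernelFork.ofι f w0) := by
    apply KernelFork.IsLimit.ofι
    case lift =>
      intro T l hl
      refine Subobject.factorThru (X ⊓ Y) (l ≫ (Y : Subobject A).arrow) ?_
      rw [Subobject.inf_factors]
      constructor
      · -- X factors
        have hl' : (l ≫ g') ≫ π = 0 := by rw [Category.assoc]; exact hl
        refine (Subobject.factors_iff _ _).mpr ⟨Abelian.monoLift g (l ≫ g') hl' ≫ 𝟙 _, ?_⟩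
        have : Abelian.monoLift g (l ≫ g') hl' ≫ g = l ≫ g' :=
          Abelian.monoLift_comp g (l ≫ g') hl'
        have harr : g ≫ (S : Subobject A).arrow = (X : Subobject A).arrow :=
          Subobject.ofLE_arrow _
        calc (Abelian.monoLift g (l ≫ g') hl' ≫ 𝟙 _) ≫ X.arrow
            = Abelian.monoLift g (l ≫ g') hl' ≫ g ≫ S.arrow := by
              rw [harr]; simp
          _ = (l ≫ g') ≫ S.arrow := by rw [← Category.assoc, this]
          _ = l ≫ Y.arrow := by rw [Category.assoc, hg', Subobject.ofLE_arrow]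
      · exact Subobject.factors_comp_arrow l
    case fac =>
      intro T l hl
      have h1 : f ≫ (Y : Subobject A).arrow = (X ⊓ Y : Subobject A).arrow :=
        Subobject.ofLE_arrow _
      rw [← cancel_mono (Y : Subobject A).arrow, Category.assoc, h1,
        Subobject.factorThru_arrow]
    case uniq =>
      intro T l hl m hm
      rw [← cancel_mono f, hm]
      symm
      have h1 : f ≫ (Y : Subobject A).arrow = (X ⊓ Y : Subobject A).arrow :=
        Subobject.ofLE_arrow _
      rw [← cancel_mono (Y : Subobject A).arrow, Category.assoc, h1,
        Subobject.factorThru_arrow]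
  -- `g' ≫ π` is an epimorphism
  have hepi : Epi (g' ≫ π) := by
    rw [Preadditive.epi_iff_cancel_zero]
    intro T t ht
    set u : (S : C) ⟶ T := π ≫ t with hu
    have gu : g ≫ u = 0 := by rw [hu, ← Category.assoc, hπ, cokernel.condition, zero_comp]
    have g'u : g' ≫ u = 0 := by rw [hu, ← Category.assoc]; exact ht
    -- both X and Y factor through the kernel of u
    set k : Subobject (S : C) := kernelSubobject u with hk
    haveI : Mono (k.arrow ≫ (S : Subobject A).arrow) := mono_comp _ _
    set K : Subobject A := Subobject.mk (k.arrow ≫ (S : Subobject A).arrow) with hK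
    have hXk : k.Factors g := kernelSubobject_factors u g gu
    have hYk : k.Factors g' := kernelSubobject_factors u g' g'u
    have hXK : X ≤ K := by
      refine Subobject.le_mk_of_comm (k.factorThru g hXk) ?_
      rw [← Category.assoc, Subobject.factorThru_arrow, hg, Subobject.ofLE_arrow]
    have hYK : Y ≤ K := by
      refine Subobject.le_mk_of_comm (k.factorThru g' hYk) ?_
      rw [← Category.assoc, Subobject.factorThru_arrow, hg', Subobject.ofLE_arrow]
    have hSK : S ≤ K := sup_le hXK hYK
    set v : (S : C) ⟶ (k : C) :=
      Subobject.ofLE S K hSK ≫ (Subobject.underlyingIso (k.arrow ≫ S.arrow)).hom with hv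
    have hv1 : v ≫ k.arrow ≫ S.arrow = S.arrow := by
      rw [hv, Category.assoc, Subobject.underlyingIso_hom_comp_eq_mk]
      exact Subobject.ofLE_arrow hSK
    have hv2 : v ≫ k.arrow = 𝟙 (S : C) := by
      rw [← cancel_mono (S : Subobject A).arrow, Category.assoc, hv1, Category.id_comp]
    have hu0 : u = 0 := by
      calc u = (v ≫ k.arrow) ≫ u := by rw [hv2, Category.id_comp]
        _ = v ≫ k.arrow ≫ u := by rw [Category.assoc]
        _ = v ≫ 0 := by rw [kernelSubobject_arrow_comp]
        _ = 0 := comp_zero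
    exact zero_of_epi_comp π (hu ▸ hu0)
  -- conclude
  exact ⟨(colimit.isColimit _).coconePointUniqueUpToIso
    (Abelian.epiIsCokernelOfKernel _ lim)⟩
end
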